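/- arXiv:math/0009072 — 7 statements merged into one kernel-verified Lean document; each statement's English description precedes it below -/
import Mathlib

section
/- Let $w$ be a weight with $W(t)=\int_0^t w$, $0<p<\infty$. If $w$ satisfies the restricted weak-type Hardy inequality on decreasing functions, i.e., for every $r>0$ and $\lambda>0$, $w(\{t>0: S\chi_{(0,r)}(t)>\lambda\})\le C\,W(r)/\lambda^p$ where $Sf(t)=\frac1t\int_0^t f$, then $w$ satisfies $R_p$: $\frac{1}{s^p}W(s)\le \frac{C'}{r^p}W(r)$ for all $0<r<s<\infty$; and conversely $R_p$ implies the restricted weak-type inequality. -/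
open MeasureTheory Set

/-! Since `S χ_{(0,r)}(t) = min 1 (r / t)`, its superlevel set at height `λ` is `(0, r/λ)` when
`λ < 1` and empty otherwise. So the weak-type inequality at height `λ = r / s` is, after
rescaling, exactly the `R_p` inequality for the pair `r < s`. -/

lemma volume_real_Ioc_inter_Ioo {r t : ℝ} (hr : 0 ≤ r) (ht : 0 ≤ t) :
    volume.real (Ioc 0 t ∩ Ioo 0 r) = min t r := by
  rcases lt_or_ge t r with htr | hrt
  · rw [Ioc_inter_Ioo_of_left_lt htr, max_self, Real.volume_real_Ioc_of_le ht, min_eq_left htr.le,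
      sub_zero]
  · rw [Ioc_inter_Ioo_of_right_le hrt, max_self, Real.volume_real_Ioo_of_le hr, min_eq_right hrt,
      sub_zero]

lemma hardy_indicator_Ioo {r t : ℝ} (hr : 0 ≤ r) (ht : 0 < t) :
    (1 / t) * ∫ s in Ioc 0 t, (Ioo 0 r).indicator (fun _ => (1 : ℝ)) s = min 1 (r / t) := by
  rw [setIntegral_indicator measurableSet_Ioo, setIntegral_const, smul_eq_mul, mul_one,
    volume_real_Ioc_inter_Ioo hr ht.le, one_div_mul_eq_div, ← min_div_div_right ht.le, div_self ht.ne']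

lemma hardy_indicator_Ioo_superlevelSet {r lam : ℝ} (hr : 0 < r) (hlam : 0 < lam) :
    {t : ℝ | 0 < t ∧ lam < (1 / t) * ∫ s in Ioc 0 t, (Ioo 0 r).indicator (fun _ => (1 : ℝ)) s}
      = if lam < 1 then Ioo 0 (r / lam) else ∅ := by
  ext t
  split_ifs with h1
  · simp only [mem_ofPred_eq, mem_Ioo, and_congr_right_iff]
    intro ht
    rw [hardy_indicator_Ioo hr.le ht, lt_min_iff, lt_div_iff₀ ht, lt_div_iff₀' hlam]
    simp [h1]
  · simp only [mem_ofPred_eq, mem_empty_iff_false, iff_false, not_and, not_lt]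
    intro ht
    rw [hardy_indicator_Ioo hr.le ht]
    exact (min_le_left _ _).trans (not_lt.1 h1)

lemma setIntegral_hardy_indicator_Ioo_superlevelSet (w : ℝ → ℝ) {r lam : ℝ} (hr : 0 < r)
    (hlam : 0 < lam) :
    ∫ t in {t : ℝ | 0 < t ∧
        lam < (1 / t) * ∫ s in Ioc 0 t, (Ioo 0 r).indicator (fun _ => (1 : ℝ)) s}, w t
      = if lam < 1 then ∫ t in Ioc 0 (r / lam), w t else 0 := by
  rw [hardy_indicator_Ioo_superlevelSet hr hlam, integral_Ioc_eq_integral_Ioo]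
  split_ifs <;> simp

lemma div_rpow_le_mul_div_rpow_iff {a b C r s p : ℝ} (hr : 0 < r) (hs : 0 < s) :
    b / s ^ p ≤ C * (a / r ^ p) ↔ b ≤ C * a / (r / s) ^ p := by
  rw [Real.div_rpow hr.le hs.le, div_le_iff₀ (Real.rpow_pos_of_pos hs p), div_div_eq_mul_div]
  ring_nf

theorem stmt_6_general (w W : ℝ → ℝ) (p : ℝ)
    (hw_nonneg : ∀ x, 0 ≤ w x)
    (hW : ∀ t, W t = ∫ s in Set.Ioc 0 t, w s) :
    (∃ C > 0, ∀ r > 0, ∀ lam > 0,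
        (∫ t in {t : ℝ | 0 < t ∧
            lam < (1 / t) * ∫ s in Set.Ioc 0 t, Set.indicator (Set.Ioo 0 r) (fun _ => (1 : ℝ)) s},
          w t) ≤ C * W r / lam ^ p) ↔
    (∃ C > 0, ∀ r s : ℝ, 0 < r → r < s → W s / s ^ p ≤ C * (W r / r ^ p)) := by
  refine ⟨fun ⟨C, hC, h⟩ => ⟨C, hC, fun r s hr hrs => ?_⟩,
    fun ⟨C, hC, h⟩ => ⟨C, hC, fun r hr lam hlam => ?_⟩⟩
  · have hs := hr.trans hrs
    have key := h r hr (r / s) (div_pos hr hs)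
    rw [setIntegral_hardy_indicator_Ioo_superlevelSet w hr (div_pos hr hs),
      if_pos ((div_lt_one hs).2 hrs), div_div_cancel₀ hr.ne', ← hW] at key
    exact (div_rpow_le_mul_div_rpow_iff hr hs).2 key
  · rw [setIntegral_hardy_indicator_Ioo_superlevelSet w hr hlam]
    split_ifs with h1
    · have hrs : r < r / lam := (lt_div_iff₀ hlam).2 (mul_lt_of_lt_one_right hr h1)
      have key := (div_rpow_le_mul_div_rpow_iff hr (hr.trans hrs)).1 (h r (r / lam) hr hrs)
      rw [div_div_cancel₀ hr.ne'] at key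
      rwa [← hW]
    · have : 0 ≤ W r := hW r ▸ setIntegral_nonneg measurableSet_Ioc fun x _ => hw_nonneg x
      positivity

/-- A weight `w` satisfies the restricted weak-type Hardy inequality
`w({S χ_{(0,r)} > λ}) ≤ C W(r)/λ^p` if and only if it satisfies the `R_p` condition
`W(s)/s^p ≤ C' W(r)/r^p` for `0 < r < s`. -/
theorem stmt_6 (w W : ℝ → ℝ) (p : ℝ) (hp : 0 < p)
    (hw_nonneg : ∀ x, 0 ≤ w x)
    (hw_meas : Measurable w)
    (hw_loc : ∀ t > 0, IntegrableOn w (Set.Ioc 0 t))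
    (hW : ∀ t, W t = ∫ s in Set.Ioc 0 t, w s) :
    (∃ C > 0, ∀ r > 0, ∀ lam > 0,
        (∫ t in {t : ℝ | 0 < t ∧
            lam < (1 / t) * ∫ s in Set.Ioc 0 t, Set.indicator (Set.Ioo 0 r) (fun _ => (1 : ℝ)) s},
          w t) ≤ C * W r / lam ^ p) ↔
    (∃ C > 0, ∀ r s : ℝ, 0 < r → r < s → W s / s ^ p ≤ C * (W r / r ^ p)) :=
  stmt_6_general w W p hw_nonneg hW
end

section
/- Let $w$ be a weight with $W(t)=\int_0^t w>0$ for $t>0$, and $1<q<\infty$. If there exists a constant $C$ such that for every positive decreasing function $f^*$ on $(0,\infty)$, $\sup_{t>0} f^{**}(t)\,W^{1/q}(t) \le C\Big(\int_0^\infty (f^*(t))\,(f^{**}(t))^{q-1}\,w(t)\,dt\Big)^{1/q}$ where $f^{**}(t)=\frac1t\int_0^t f^*$, then $w\in R_q$, i.e., $\sup_{r<s} \frac{W^{1/q}(s)}{s} \le C' \frac{W^{1/q}(r)}{r}$ for all $r>0$. -/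
/-!
Test the hypothesis on `f* = χ_(0,r)`. Then `f** = 1` on `(0, r]`, so the right-hand side is
`C W(r)^{1/q}`, while at `t = s > r` the left-hand side is `(r/s) W(s)^{1/q}`.
-/

open MeasureTheory Set

lemma antitoneOn_indicator_one_Ioc (r : ℝ) :
    AntitoneOn ((Ioc 0 r).indicator (fun _ => (1 : ℝ))) (Ioi 0) := by
  intro x hx y hy hxy
  by_cases hyr : y ≤ r
  · rw [indicator_of_mem (show y ∈ Ioc 0 r from ⟨hy, hyr⟩),
      indicator_of_mem (show x ∈ Ioc 0 r from ⟨hx, hxy.trans hyr⟩)]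
  · rw [indicator_of_notMem (fun h => hyr h.2)]
    exact indicator_nonneg (fun _ _ => zero_le_one) x

lemma setIntegral_Ioc_indicator_one_Ioc {t r : ℝ} (ht : 0 ≤ t) (hr : 0 ≤ r) :
    ∫ u in Ioc 0 t, (Ioc 0 r).indicator (fun _ => (1 : ℝ)) u = min t r := by
  rw [setIntegral_indicator measurableSet_Ioc, Ioc_inter_Ioc, max_self]
  simp [ht, hr]

lemma indicator_one_mul_average_rpow_mul_eq_indicator (w : ℝ → ℝ) (q r : ℝ) {x : ℝ}
    (hx : 0 < x) :
    (Ioc 0 r).indicator (fun _ => 1) x *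
        ((1 / x) * ∫ u in Ioc 0 x, (Ioc 0 r).indicator (fun _ => (1 : ℝ)) u) ^ (q - 1) * w x =
      (Ioc 0 r).indicator w x := by
  by_cases hxr : x ≤ r
  · have hmem : x ∈ Ioc 0 r := ⟨hx, hxr⟩
    rw [setIntegral_Ioc_indicator_one_Ioc hx.le (hx.le.trans hxr), min_eq_left hxr,
      one_div, inv_mul_cancel₀ hx.ne', Real.one_rpow, indicator_of_mem hmem,
      indicator_of_mem hmem, one_mul, one_mul]
  · have hmem : x ∉ Ioc 0 r := fun h => hxr h.2
    rw [indicator_of_notMem hmem, indicator_of_notMem hmem, zero_mul, zero_mul]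

lemma setIntegral_Ioi_indicator_one_mul_average_rpow_mul (w : ℝ → ℝ) (q r : ℝ) :
    ∫ x in Ioi 0, (Ioc 0 r).indicator (fun _ => 1) x *
        ((1 / x) * ∫ u in Ioc 0 x, (Ioc 0 r).indicator (fun _ => (1 : ℝ)) u) ^ (q - 1) * w x =
      ∫ x in Ioc 0 r, w x := by
  rw [setIntegral_congr_fun measurableSet_Ioi
      (fun x hx => indicator_one_mul_average_rpow_mul_eq_indicator w q r hx),
    setIntegral_indicator measurableSet_Ioc, inter_eq_self_of_subset_right Ioc_subset_Ioi_self]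

theorem stmt_7_general (w W : ℝ → ℝ) (q : ℝ)
    (hW : ∀ t, W t = ∫ s in Set.Ioc 0 t, w s)
    (hyp : ∃ C > 0, ∀ f : ℝ → ℝ, (∀ x, 0 ≤ f x) → AntitoneOn f (Set.Ioi 0) →
      ∀ t > 0, ((1 / t) * ∫ s in Set.Ioc 0 t, f s) * (W t) ^ (1 / q) ≤
        C * (∫ x in Set.Ioi 0,
          f x * ((1 / x) * ∫ s in Set.Ioc 0 x, f s) ^ (q - 1) * w x) ^ (1 / q)) :
    ∃ C > 0, ∀ r s : ℝ, 0 < r → r < s →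
      (W s) ^ (1 / q) / s ≤ C * ((W r) ^ (1 / q) / r) := by
  obtain ⟨C, hC, hyp⟩ := hyp
  refine ⟨C, hC, fun r s hr hrs => ?_⟩
  have hs : 0 < s := hr.trans hrs
  have htest := hyp _ (indicator_nonneg fun _ _ => zero_le_one) (antitoneOn_indicator_one_Ioc r) s hs
  rw [setIntegral_Ioc_indicator_one_Ioc hs.le hr.le, min_eq_right hrs.le,
    setIntegral_Ioi_indicator_one_mul_average_rpow_mul, ← hW] at htest
  rw [← mul_div_assoc, div_le_div_iff₀ hs hr]
  calc W s ^ (1 / q) * r = 1 / s * r * W s ^ (1 / q) * s := by field_simp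
    _ ≤ C * W r ^ (1 / q) * s := by gcongr

/-- If the embedding `Γ^q_1(w) ⊂ Γ^{q,∞}(w)` holds on decreasing functions, i.e.
`f**(t) W^{1/q}(t) ≤ C (∫_0^∞ f* (f**)^{q-1} w)^{1/q}` for all `t > 0` and all nonnegative
decreasing `f*`, then `w ∈ R_q`: `W^{1/q}(s)/s ≤ C' W^{1/q}(r)/r` for `0 < r < s`. -/
theorem stmt_7 (w W : ℝ → ℝ) (q : ℝ) (hq : 1 < q)
    (hw_nonneg : ∀ x, 0 ≤ w x)
    (hw_loc : ∀ t > 0, IntegrableOn w (Set.Ioc 0 t))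
    (hW : ∀ t, W t = ∫ s in Set.Ioc 0 t, w s)
    (hWpos : ∀ t > 0, 0 < W t)
    (hyp : ∃ C > 0, ∀ f : ℝ → ℝ, (∀ x, 0 ≤ f x) → AntitoneOn f (Set.Ioi 0) →
      ∀ t > 0, ((1 / t) * ∫ s in Set.Ioc 0 t, f s) * (W t) ^ (1 / q) ≤
        C * (∫ x in Set.Ioi 0,
          f x * ((1 / x) * ∫ s in Set.Ioc 0 x, f s) ^ (q - 1) * w x) ^ (1 / q)) :
    ∃ C > 0, ∀ r s : ℝ, 0 < r → r < s →
      (W s) ^ (1 / q) / s ≤ C * ((W r) ^ (1 / q) / r) :=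
  stmt_7_general w W q hW hyp
end

section
/- Let $w$ be a weight, $W(t)=\int_0^t w$, $1<q<\infty$, $1<\alpha\le q$, and fix $a>0$, $s>1$. For the decreasing function $f^*(x)=\chi_{(0,a]}(x) + \frac{a}{x}\chi_{(a,sa]}(x)$, one has $f^{**}(as) = \frac{1+\log s}{s}$ and $\int_0^\infty (f^*(t))^\alpha (f^{**}(t))^{q-\alpha} w(t)\,dt \le C_q\Big(\int_0^a w + \int_a^{as}\Big(\frac{a}{x}\Big)^q\Big(1+\log\frac{x}{a}\Big)^{q-\alpha}w(x)\,dx\Big)$ for a constant $C_q$ depending only on $q$. -/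
open MeasureTheory Set

private noncomputable def myf (a s : ℝ) : ℝ → ℝ := fun x =>
  Set.indicator (Set.Ioc 0 a) (fun _ => (1 : ℝ)) x +
    (a / x) * Set.indicator (Set.Ioc a (s * a)) (fun _ => (1 : ℝ)) x

private lemma myf_one {a s x : ℝ} (hx : x ∈ Ioc 0 a) : myf a s x = 1 := by
  have h2 : x ∉ Ioc a (s * a) := fun h => absurd hx.2 (not_le.2 h.1)
  simp [myf, indicator_of_mem hx, indicator_of_notMem h2]

private lemma myf_mid {a s x : ℝ} (hx : x ∈ Ioc a (s * a)) : myf a s x = a / x := by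
  have h1 : x ∉ Ioc 0 a := fun h => absurd h.2 (not_le.2 hx.1)
  simp [myf, indicator_of_mem hx, indicator_of_notMem h1]

private lemma myf_zero {a s x : ℝ} (ha : 0 < a) (hs : 1 < s) (hx : a * s < x) :
    myf a s x = 0 := by
  have hax : a < x := by nlinarith
  have h1 : x ∉ Ioc 0 a := fun h => absurd h.2 (not_le.2 hax)
  have h2 : x ∉ Ioc a (s * a) := fun h => absurd h.2 (not_le.2 (by linarith [mul_comm a s]))
  simp [myf, indicator_of_notMem h1, indicator_of_notMem h2]

private lemma intaux (a b c : ℝ) (hb : 0 < b) (hbc : b ≤ c) :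
    ∫ u in Ioc b c, a / u = a * Real.log (c / b) := by
  rw [← intervalIntegral.integral_of_le hbc]
  have h0 : (0:ℝ) ∉ Set.uIcc b c := by
    rw [Set.uIcc_of_le hbc]; intro h; exact absurd h.1 (not_le.2 hb)
  calc ∫ u in b..c, a / u = ∫ u in b..c, a * (1 / u) := by
        congr 1; ext u; ring
    _ = a * ∫ u in b..c, 1 / u := intervalIntegral.integral_const_mul _ _
    _ = a * Real.log (c / b) := by rw [integral_one_div h0]

private lemma myF_low {a s t : ℝ} (ht : t ∈ Ioc 0 a) :
    ∫ u in Ioc 0 t, myf a s u = t := by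
  rw [setIntegral_congr_fun measurableSet_Ioc
    (g := fun _ => (1:ℝ)) (fun u hu => myf_one ⟨hu.1, hu.2.trans ht.2⟩)]
  simp [Real.volume_Ioc, ht.1.le]

private lemma myf_int_low {a s t : ℝ} (ht : t ∈ Ioc 0 a) :
    IntegrableOn (myf a s) (Ioc 0 t) := by
  refine (integrableOn_const ?_).congr_fun
    (fun u hu => (myf_one ⟨hu.1, hu.2.trans ht.2⟩).symm) measurableSet_Ioc
  simp [Real.volume_Ioc]

private lemma myf_int_mid {a s t : ℝ} (ha : 0 < a) (ht : a ≤ t) (ht2 : t ≤ s * a) :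
    IntegrableOn (myf a s) (Ioc a t) := by
  have hc : ContinuousOn (fun u : ℝ => a / u) (Icc a t) :=
    continuousOn_const.div continuousOn_id (fun u hu => ne_of_gt (lt_of_lt_of_le ha hu.1))
  refine ((hc.integrableOn_Icc).mono_set Ioc_subset_Icc_self).congr_fun
    (fun u hu => (myf_mid ⟨hu.1, hu.2.trans ht2⟩).symm) measurableSet_Ioc

private lemma myF_mid {a s t : ℝ} (ha : 0 < a) (ht : t ∈ Ioc a (s * a)) :
    ∫ u in Ioc 0 t, myf a s u = a + a * Real.log (t / a) := by
  rw [← Ioc_union_Ioc_eq_Ioc ha.le ht.1.le,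
    setIntegral_union (Ioc_disjoint_Ioc_of_le le_rfl) measurableSet_Ioc
      (myf_int_low ⟨ha, le_refl a⟩) (myf_int_mid ha ht.1.le ht.2),
    myF_low ⟨ha, le_refl a⟩,
    setIntegral_congr_fun measurableSet_Ioc (g := fun u => a / u)
      (fun u hu => myf_mid ⟨hu.1, hu.2.trans ht.2⟩),
    intaux a a t ha ht.1.le]


/-- Test-function computation: for `f*(x) = χ_{(0,a]}(x) + (a/x) χ_{(a,sa]}(x)` one has
`f**(as) = (1+log s)/s`, and
`∫_0^∞ (f*)^α (f**)^{q-α} w ≤ C_q (∫_0^a w + ∫_a^{as} (a/x)^q (1+log(x/a))^{q-α} w(x) dx)`,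
with `C_q` depending only on `q`. -/
theorem stmt_8 (q α : ℝ) (hq : 1 < q) (hα : 1 < α) (hαq : α ≤ q) :
    ∃ C > 0, ∀ w : ℝ → ℝ, (∀ x, 0 ≤ w x) → Measurable w →
      (∀ t > 0, IntegrableOn w (Set.Ioc 0 t)) →
      ∀ a > (0 : ℝ), ∀ s > (1 : ℝ),
        (let f : ℝ → ℝ := fun x =>
          Set.indicator (Set.Ioc 0 a) (fun _ => (1 : ℝ)) x +
            (a / x) * Set.indicator (Set.Ioc a (s * a)) (fun _ => (1 : ℝ)) x
        ((1 / (a * s)) * ∫ t in Set.Ioc 0 (a * s), f t) = (1 + Real.log s) / s ∧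
        (∫ t in Set.Ioi 0,
            (f t) ^ α * ((1 / t) * ∫ u in Set.Ioc 0 t, f u) ^ (q - α) * w t) ≤
          C * ((∫ x in Set.Ioc 0 a, w x) +
            ∫ x in Set.Ioc a (a * s), (a / x) ^ q * (1 + Real.log (x / a)) ^ (q - α) * w x)) := by
  refine ⟨1, one_pos, ?_⟩
  intro w hw hwm hwint a ha s hs
  have ha' := ha
  have hs1 : (0:ℝ) < s := by linarith
  have haas : a < a * s := by nlinarith
  have hmem : a * s ∈ Ioc a (s * a) := ⟨haas, le_of_eq (mul_comm a s)⟩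
  show ((1 / (a * s)) * ∫ t in Set.Ioc 0 (a * s), myf a s t) = (1 + Real.log s) / s ∧
        (∫ t in Set.Ioi 0,
            (myf a s t) ^ α * ((1 / t) * ∫ u in Set.Ioc 0 t, myf a s u) ^ (q - α) * w t) ≤
          1 * ((∫ x in Set.Ioc 0 a, w x) +
            ∫ x in Set.Ioc a (a * s), (a / x) ^ q * (1 + Real.log (x / a)) ^ (q - α) * w x)
  constructor
  · rw [myF_mid ha hmem]
    have : Real.log (a * s / a) = Real.log s := by
      rw [mul_comm, mul_div_assoc, div_self (ne_of_gt ha), mul_one]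
    rw [this]
    field_simp
  · set g : ℝ → ℝ := fun t =>
      (myf a s t) ^ α * ((1 / t) * ∫ u in Set.Ioc 0 t, myf a s u) ^ (q - α) * w t with hg
    set h : ℝ → ℝ := fun x => (a / x) ^ q * (1 + Real.log (x / a)) ^ (q - α) * w x with hh
    -- g vanishes beyond a*s
    have hgzero : ∀ t ∈ Ioi (0:ℝ), g t = (Ioc 0 (a*s)).indicator g t := by
      intro t ht
      by_cases hts : t ≤ a * s
      · exact (indicator_of_mem (show t ∈ Ioc 0 (a*s) from ⟨ht, hts⟩) g).symm
      · rw [indicator_of_notMem (fun hmem' => hts hmem'.2), hg]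
        simp only
        rw [myf_zero ha hs (not_le.1 hts), Real.zero_rpow (by linarith : α ≠ 0)]
        ring
    -- g = w on Ioc 0 a
    have hglow : ∀ t ∈ Ioc (0:ℝ) a, g t = w t := by
      intro t ht
      rw [hg]; simp only
      rw [myf_one ht, myF_low ht, one_div, inv_mul_cancel₀ (ne_of_gt ht.1),
        Real.one_rpow, Real.one_rpow]
      ring
    -- g = h on Ioc a (a*s)
    have hgmid : ∀ t ∈ Ioc a (a*s), g t = h t := by
      intro t ht
      have ht' : t ∈ Ioc a (s * a) := ⟨ht.1, ht.2.trans (le_of_eq (mul_comm a s))⟩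
      have ht0 : 0 < t := lt_trans ha ht.1
      have hat : 0 < a / t := div_pos ha ht0
      have hlog : 0 ≤ 1 + Real.log (t / a) := by
        have : 0 ≤ Real.log (t / a) :=
          Real.log_nonneg ((one_le_div ha).2 ht.1.le)
        linarith
      rw [hg, hh]; simp only
      rw [myf_mid ht', myF_mid ha ht']
      have h1 : (1 / t) * (a + a * Real.log (t / a)) = (a / t) * (1 + Real.log (t / a)) := by
        field_simp
      rw [h1, Real.mul_rpow hat.le hlog]
      have key2 : (a/t)^α * (a/t)^(q-α) = (a/t)^q := by
        rw [← Real.rpow_add hat]; ring_nf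
      calc (a/t)^α * ((a/t)^(q-α) * (1+Real.log (t/a))^(q-α)) * w t
          = ((a/t)^α * (a/t)^(q-α)) * (1+Real.log (t/a))^(q-α) * w t := by ring
        _ = (a/t)^q * (1+Real.log (t/a))^(q-α) * w t := by rw [key2]
    -- integrability of h on Ioc a (a*s)
    have hwint2 : IntegrableOn w (Ioc a (a*s)) :=
      (hwint (a*s) (by positivity)).mono_set (Ioc_subset_Ioc_left ha.le)
    have hhint : IntegrableOn h (Ioc a (a*s)) := by
      have hmeas : AEStronglyMeasurable h (volume.restrict (Ioc a (a*s))) := by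
        apply Measurable.aestronglyMeasurable
        rw [hh]
        exact (((measurable_const.div measurable_id).pow_const q).mul
          ((measurable_const.add (Real.measurable_log.comp
            (measurable_id.div_const a))).pow_const (q - α))).mul hwm
      refine (hwint2.const_mul ((1 + Real.log s) ^ (q - α))).mono' hmeas ?_
      refine (ae_restrict_iff' measurableSet_Ioc).2 (Filter.Eventually.of_forall ?_)
      intro x hx
      have hx0 : 0 < x := lt_trans ha hx.1
      have hax : 0 < a / x := div_pos ha hx0
      have hlog : 0 ≤ 1 + Real.log (x / a) := by
        have : 0 ≤ Real.log (x / a) := Real.log_nonneg ((one_le_div ha).2 hx.1.le)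
        linarith
      have h1 : (a / x) ^ q ≤ 1 :=
        Real.rpow_le_one hax.le ((div_le_one hx0).2 hx.1.le) (by linarith)
      have h2 : (1 + Real.log (x / a)) ^ (q - α) ≤ (1 + Real.log s) ^ (q - α) := by
        apply Real.rpow_le_rpow hlog _ (by linarith)
        have : x / a ≤ s := (div_le_iff₀ ha).2 (by linarith [hx.2, mul_comm a s])
        have := Real.log_le_log (div_pos hx0 ha) this
        linarith
      have hrw : ‖h x‖ = (a / x) ^ q * (1 + Real.log (x / a)) ^ (q - α) * w x := by
        rw [hh]; simp only [Real.norm_eq_abs]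
        exact abs_of_nonneg (mul_nonneg (mul_nonneg (Real.rpow_nonneg hax.le q)
          (Real.rpow_nonneg hlog _)) (hw x))
      rw [hrw]
      calc (a / x) ^ q * (1 + Real.log (x / a)) ^ (q - α) * w x
          ≤ 1 * ((1 + Real.log s) ^ (q - α)) * w x := by
            apply mul_le_mul_of_nonneg_right _ (hw x)
            exact mul_le_mul h1 h2 (by positivity) zero_le_one
        _ = (1 + Real.log s) ^ (q - α) * w x := by ring
    have key : (∫ t in Set.Ioi 0, g t) =
        (∫ x in Set.Ioc 0 a, w x) + ∫ x in Set.Ioc a (a*s), h x := by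
      rw [setIntegral_congr_fun measurableSet_Ioi hgzero,
        setIntegral_indicator measurableSet_Ioc,
        inter_eq_self_of_subset_right Ioc_subset_Ioi_self,
        ← Ioc_union_Ioc_eq_Ioc ha.le (le_of_lt haas),
        setIntegral_union (Ioc_disjoint_Ioc_of_le le_rfl) measurableSet_Ioc
          ((hwint a ha).congr_fun (fun x hx => (hglow x hx).symm) measurableSet_Ioc)
          (hhint.congr_fun (fun x hx => (hgmid x hx).symm) measurableSet_Ioc),
        setIntegral_congr_fun measurableSet_Ioc hglow,
        setIntegral_congr_fun measurableSet_Ioc hgmid]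
    rw [one_mul]
    exact le_of_eq key
end

section
/- Let $w$ be a decreasing weight with $\lim_{t\to\infty}w(t)=c>0$. Then there is no weight $v$ such that for all $r>0$, $\Big(\int_0^r w\Big)^q \approx \int_0^r v + r^q\int_r^\infty \frac{v(x)}{x^q}\,dx$ with $1<q<\infty$ and $\int_r^\infty v(x)x^{-q}\,dx<\infty$ for some $r$. -/
open MeasureTheory Set

set_option maxHeartbeats 1000000

/-- If `w` is a decreasing weight with `w(∞) = c > 0` and `1 < q < ∞`, there is no weight `v`
with finite tail integral such that `(∫_0^r w)^q ≈ ∫_0^r v + r^q ∫_r^∞ v(x)/x^q dx`. -/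
theorem stmt_10 (w : ℝ → ℝ) (q c : ℝ) (hq : 1 < q) (hc : 0 < c)
    (hw_nonneg : ∀ x, 0 ≤ w x)
    (hw_dec : AntitoneOn w (Set.Ioi 0))
    (hw_lim : Filter.Tendsto w Filter.atTop (nhds c))
    (hw_loc : ∀ t > 0, IntegrableOn w (Set.Ioc 0 t)) :
    ¬ ∃ v : ℝ → ℝ, Measurable v ∧ (∀ x, 0 ≤ v x) ∧
      (∃ r > 0, IntegrableOn (fun x => v x / x ^ q) (Set.Ioi r)) ∧
      ∃ C > 0, ∀ r > 0,
        C⁻¹ * (∫ x in Set.Ioc 0 r, w x) ^ q ≤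
          (∫ x in Set.Ioc 0 r, v x) + r ^ q * ∫ x in Set.Ioi r, v x / x ^ q ∧
        (∫ x in Set.Ioc 0 r, v x) + r ^ q * ∫ x in Set.Ioi r, v x / x ^ q ≤
          C * (∫ x in Set.Ioc 0 r, w x) ^ q := by
  rintro ⟨v, hv_meas, hv_nonneg, ⟨r₀', hr₀', hint'⟩, C, hC, hCr⟩
  set f : ℝ → ℝ := fun x => v x / x ^ q with hf
  set r₀ : ℝ := max r₀' 1 with hr₀def
  have hq0 : (0:ℝ) < q := lt_trans one_pos hq
  have hr₀1 : (1:ℝ) ≤ r₀ := le_max_right _ _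
  have hr₀0 : (0:ℝ) < r₀ := lt_of_lt_of_le one_pos hr₀1
  have hint : IntegrableOn f (Set.Ioi r₀) := hint'.mono_set (Ioi_subset_Ioi (le_max_left _ _))
  -- f is nonneg on positive reals
  have hfnn : ∀ x : ℝ, 0 < x → 0 ≤ f x := fun x hx =>
    div_nonneg (hv_nonneg x) (Real.rpow_pos_of_pos hx q).le
  -- w ≥ c
  have hwc : ∀ x > (0:ℝ), c ≤ w x := by
    intro x hx
    refine le_of_tendsto hw_lim ?_
    filter_upwards [Filter.eventually_ge_atTop x] with y hy
    exact hw_dec hx (lt_of_lt_of_le hx hy) hy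
  -- lower bound for ∫ w
  have hWlow : ∀ r > (0:ℝ), c * r ≤ ∫ x in Set.Ioc 0 r, w x := by
    intro r hr
    have h1 : ∫ x in Set.Ioc (0:ℝ) r, c ≤ ∫ x in Set.Ioc 0 r, w x :=
      setIntegral_mono_on (integrableOn_const measure_Ioc_lt_top.ne)
        (hw_loc r hr) measurableSet_Ioc (fun x hx => hwc x hx.1)
    rw [setIntegral_const, Real.volume_real_Ioc_of_le (by linarith)] at h1
    calc c * r = (r - 0) • c := by rw [smul_eq_mul]; ring
    _ ≤ _ := h1
  -- upper bound for ∫ w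
  set A : ℝ := ∫ x in Set.Ioc (0:ℝ) 1, w x with hA
  have hA0 : 0 ≤ A := setIntegral_nonneg measurableSet_Ioc (fun x _ => hw_nonneg x)
  set M : ℝ := A + w 1 with hM
  have hM0 : 0 < M := lt_of_lt_of_le hc (le_trans (hwc 1 one_pos) (by simp [hM]; linarith))
  have hWup : ∀ r, 1 ≤ r → (∫ x in Set.Ioc (0:ℝ) r, w x) ≤ M * r := by
    intro r hr
    have hr0 : (0:ℝ) < r := lt_of_lt_of_le one_pos hr
    have hsplit : Set.Ioc (0:ℝ) 1 ∪ Set.Ioc (1:ℝ) r = Set.Ioc (0:ℝ) r :=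
      Set.Ioc_union_Ioc_eq_Ioc (by norm_num) hr
    have hi1 : IntegrableOn w (Set.Ioc (0:ℝ) 1) := hw_loc 1 one_pos
    have hi2 : IntegrableOn w (Set.Ioc (1:ℝ) r) :=
      (hw_loc r hr0).mono_set (Set.Ioc_subset_Ioc_left (by norm_num))
    have hdis : Disjoint (Set.Ioc (0:ℝ) 1) (Set.Ioc (1:ℝ) r) :=
      Set.disjoint_left.mpr fun x hx hx' => absurd hx.2 (not_le.mpr hx'.1)
    have heq : (∫ x in Set.Ioc (0:ℝ) r, w x) = A + ∫ x in Set.Ioc (1:ℝ) r, w x := by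
      rw [← hsplit, MeasureTheory.setIntegral_union hdis measurableSet_Ioc hi1 hi2]
    have h2 : (∫ x in Set.Ioc (1:ℝ) r, w x) ≤ ∫ x in Set.Ioc (1:ℝ) r, w 1 :=
      setIntegral_mono_on hi2 (integrableOn_const measure_Ioc_lt_top.ne)
        measurableSet_Ioc (fun x hx => hw_dec (Set.mem_Ioi.mpr one_pos) (Set.mem_Ioi.mpr (lt_trans one_pos hx.1)) hx.1.le)
    rw [setIntegral_const, Real.volume_real_Ioc_of_le (by linarith), smul_eq_mul] at h2
    have hw1 : 0 ≤ w 1 := hw_nonneg 1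
    rw [heq, hM]
    nlinarith [hA0]
  -- the tail integral
  set T : ℝ → ℝ := fun a => ∫ x in Set.Ioi a, f x with hT
  have hTsplit : ∀ a b : ℝ, r₀ ≤ a → a ≤ b →
      T a = (∫ x in Set.Ioc a b, f x) + T b := by
    intro a b ha hab
    have h1 : IntegrableOn f (Set.Ioc a b) :=
      hint.mono_set (fun x hx => lt_of_le_of_lt ha hx.1)
    have h2 : IntegrableOn f (Set.Ioi b) :=
      hint.mono_set (Ioi_subset_Ioi (le_trans ha hab))
    have hdis : Disjoint (Set.Ioc a b) (Set.Ioi b) :=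
      Set.disjoint_left.mpr fun x hx hx' => absurd hx.2 (not_le.mpr hx')
    rw [hT]
    simp only
    rw [← Set.Ioc_union_Ioi_eq_Ioi hab, MeasureTheory.setIntegral_union hdis measurableSet_Ioi h1 h2]
  have hTnn : ∀ a : ℝ, r₀ ≤ a → 0 ≤ T a :=
    fun a ha => setIntegral_nonneg measurableSet_Ioi
      (fun x hx => hfnn x (lt_trans hr₀0 (lt_of_le_of_lt (le_refl _) (lt_of_le_of_lt ha hx))))
  have hTmono : ∀ a b : ℝ, r₀ ≤ a → a ≤ b → T b ≤ T a := by
    intro a b ha hab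
    rw [hTsplit a b ha hab]
    have : 0 ≤ ∫ x in Set.Ioc a b, f x :=
      setIntegral_nonneg measurableSet_Ioc (fun x hx => hfnn x (lt_of_lt_of_le hr₀0 (le_of_lt (lt_of_le_of_lt ha hx.1))))
    linarith
  -- constants
  set K : ℝ := C⁻¹ * c ^ q with hK
  have hK0 : 0 < K := mul_pos (inv_pos.mpr hC) (Real.rpow_pos_of_pos hc q)
  -- key lower bound from hCr
  have hKey : ∀ r, r₀ ≤ r → K * r ^ q ≤ (∫ x in Set.Ioc 0 r, v x) + r ^ q * T r := by
    intro r hr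
    have hr0 : 0 < r := lt_of_lt_of_le hr₀0 hr
    have h1 := (hCr r hr0).1
    have h2 : (c * r) ^ q ≤ (∫ x in Set.Ioc 0 r, w x) ^ q :=
      Real.rpow_le_rpow (by positivity) (hWlow r hr0) hq0.le
    rw [Real.mul_rpow hc.le hr0.le] at h2
    calc K * r ^ q = C⁻¹ * (c ^ q * r ^ q) := by rw [hK]; ring
    _ ≤ C⁻¹ * (∫ x in Set.Ioc 0 r, w x) ^ q :=
        mul_le_mul_of_nonneg_left h2 (inv_pos.mpr hC).le
    _ ≤ _ := h1
  -- upper bound from hCr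
  have hVup : ∀ r, 1 ≤ r → (∫ x in Set.Ioc 0 r, v x) ≤ C * M ^ q * r ^ q := by
    intro r hr
    have hr0 : (0:ℝ) < r := lt_of_lt_of_le one_pos hr
    have h1 := (hCr r hr0).2
    have h2 : (∫ x in Set.Ioc 0 r, w x) ^ q ≤ (M * r) ^ q :=
      Real.rpow_le_rpow (setIntegral_nonneg measurableSet_Ioc (fun x _ => hw_nonneg x)) (hWup r hr) hq0.le
    have h3 : 0 ≤ r ^ q * T r := by
      apply mul_nonneg (Real.rpow_pos_of_pos hr0 q).le
      exact setIntegral_nonneg measurableSet_Ioi (fun x hx => hfnn x (lt_trans hr0 hx))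
    rw [Real.mul_rpow hM0.le hr0.le] at h2
    have h4 : C * (∫ x in Set.Ioc 0 r, w x) ^ q ≤ C * (M ^ q * r ^ q) :=
      mul_le_mul_of_nonneg_left h2 hC.le
    nlinarith
  set B : ℝ := C * M ^ q with hB
  have hB0 : 0 < B := mul_pos hC (Real.rpow_pos_of_pos hM0 q)
  -- find r₁ ≥ r₀ with T r₁ < K/2
  have hr₁ : ∃ r₁, r₀ ≤ r₁ ∧ T r₁ < K / 2 := by
    have hmono : Monotone (fun n : ℕ => Set.Ioc r₀ (r₀ + (n:ℝ))) := by
      intro m n hmn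
      exact Set.Ioc_subset_Ioc le_rfl (by exact_mod_cast add_le_add_right (Nat.cast_le.mpr hmn) r₀)
    have hunion : (⋃ n : ℕ, Set.Ioc r₀ (r₀ + (n:ℝ))) = Set.Ioi r₀ := by
      ext x
      simp only [Set.mem_iUnion, Set.mem_Ioc, Set.mem_Ioi]
      constructor
      · rintro ⟨n, h1, _⟩; exact h1
      · intro hx
        obtain ⟨n, hn⟩ := exists_nat_ge (x - r₀)
        exact ⟨n, hx, by linarith⟩
    have htd := MeasureTheory.tendsto_setIntegral_of_monotone
      (fun n : ℕ => measurableSet_Ioc) hmono (hunion ▸ hint)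
    rw [hunion] at htd
    have htd2 : Filter.Tendsto (fun n : ℕ => T (r₀ + (n:ℝ))) Filter.atTop (nhds 0) := by
      have heq : ∀ n : ℕ, T (r₀ + (n:ℝ)) = T r₀ - ∫ x in Set.Ioc r₀ (r₀ + (n:ℝ)), f x := by
        intro n
        rw [hTsplit r₀ (r₀ + n) le_rfl (le_add_of_nonneg_right (Nat.cast_nonneg n))]; ring
      simp only [heq]
      have := htd.const_sub (T r₀)
      simpa [hT] using this
    have := (htd2.eventually (eventually_lt_nhds (by linarith : (0:ℝ) < K/2))).exists
    obtain ⟨n, hn⟩ := this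
    exact ⟨r₀ + n, le_add_of_nonneg_right (Nat.cast_nonneg n), hn⟩
  obtain ⟨r₁, hr₁₀, hTr₁⟩ := hr₁
  have hr₁1 : (1:ℝ) ≤ r₁ := le_trans hr₀1 hr₁₀
  have hr₁0 : (0:ℝ) < r₁ := lt_of_lt_of_le one_pos hr₁1
  -- case: v not integrable near 0
  by_cases hv01 : IntegrableOn v (Set.Ioc 0 r₁)
  case neg =>
    have h0 : (∫ x in Set.Ioc (0:ℝ) r₁, v x) = 0 := integral_undef hv01
    have := hKey r₁ hr₁₀
    rw [h0, zero_add] at this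
    have hrq : (0:ℝ) < r₁ ^ q := Real.rpow_pos_of_pos hr₁0 q
    have : K ≤ T r₁ := by
      have := (mul_le_mul_iff_of_pos_right hrq).mp (by linarith [this] : K * r₁ ^ q ≤ T r₁ * r₁ ^ q)
      linarith
    linarith
  case pos =>
  -- integrability of v on Ioc a b for r₁ ≤ a
  have hvint : ∀ a b : ℝ, r₁ ≤ a → IntegrableOn v (Set.Ioc a b) := by
    intro a b ha
    rcases le_or_gt b a with h | h
    · rw [Set.Ioc_eq_empty (not_lt.mpr h)]; exact integrableOn_empty
    have hab : Set.Ioc a b ⊆ Set.Ioi r₀ := fun x hx => lt_of_le_of_lt (le_trans hr₁₀ ha) hx.1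
    have hfab : IntegrableOn f (Set.Ioc a b) := hint.mono_set hab
    refine Integrable.mono' (hfab.const_mul (b ^ q)) (hv_meas.aestronglyMeasurable.restrict) ?_
    rw [ae_restrict_iff' measurableSet_Ioc]
    filter_upwards with x hx
    have hx0 : (0:ℝ) < x := lt_of_lt_of_le (lt_of_lt_of_le one_pos (le_trans hr₁1 ha)) hx.1.le
    have hxq : (0:ℝ) < x ^ q := Real.rpow_pos_of_pos hx0 q
    have hxb : x ^ q ≤ b ^ q := Real.rpow_le_rpow hx0.le hx.2 hq0.le
    rw [Real.norm_eq_abs, abs_of_nonneg (hv_nonneg x)]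
    have : v x = f x * x ^ q := by rw [hf]; field_simp
    rw [this]
    calc f x * x ^ q ≤ f x * b ^ q := mul_le_mul_of_nonneg_left hxb (hfnn x hx0)
    _ = b ^ q * f x := mul_comm _ _
  -- V difference
  have hVdiff : ∀ a b : ℝ, r₁ ≤ a → a ≤ b →
      (∫ x in Set.Ioc a b, v x) = (∫ x in Set.Ioc 0 b, v x) - ∫ x in Set.Ioc 0 a, v x := by
    intro a b ha hab
    have hia : IntegrableOn v (Set.Ioc 0 a) := by
      have heq : Set.Ioc (0:ℝ) r₁ ∪ Set.Ioc r₁ a = Set.Ioc 0 a := Set.Ioc_union_Ioc_eq_Ioc hr₁0.le ha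
      rw [← heq]; exact hv01.union (hvint r₁ a le_rfl)
    have hiab : IntegrableOn v (Set.Ioc a b) := hvint a b ha
    have hdis : Disjoint (Set.Ioc (0:ℝ) a) (Set.Ioc a b) :=
      Set.disjoint_left.mpr fun x hx hx' => absurd hx.2 (not_le.mpr hx'.1)
    have : (∫ x in Set.Ioc (0:ℝ) b, v x) = (∫ x in Set.Ioc (0:ℝ) a, v x) + ∫ x in Set.Ioc a b, v x := by
      rw [← Set.Ioc_union_Ioc_eq_Ioc (le_trans hr₁0.le ha) hab,
        MeasureTheory.setIntegral_union hdis measurableSet_Ioc hia hiab]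
    linarith
  -- choose L
  set L : ℝ := (4 * B / K + 1) ^ (1/q) with hL
  have hbase : (1:ℝ) < 4 * B / K + 1 := by
    have : 0 < 4 * B / K := by positivity
    linarith
  have hL1 : 1 < L := by
    rw [hL]
    rw [Real.one_lt_rpow_iff_of_pos (by linarith)]
    exact Or.inl ⟨hbase, by positivity⟩
  have hLq : L ^ q = 4 * B / K + 1 := by
    rw [hL, ← Real.rpow_mul (by linarith : (0:ℝ) ≤ 4 * B / K + 1), one_div_mul_cancel hq0.ne',
      Real.rpow_one]
  have hBLq : B / L ^ q < K / 4 := by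
    rw [hLq]
    rw [div_lt_iff₀ (by positivity)]
    have : K / 4 * (4 * B / K) = B := by field_simp
    nlinarith [this, hK0, hB0]
  clear_value L
  clear_value K B M A
  -- the main step
  have hstep : ∀ a : ℝ, r₁ ≤ a → T (L * a) ≤ T a - K / 4 := by
    intro a ha
    have ha0 : (0:ℝ) < a := lt_of_lt_of_le hr₁0 ha
    have hb : a ≤ L * a := le_mul_of_one_le_left ha0.le hL1.le
    set b : ℝ := L * a with hbdef
    have hb0 : (0:ℝ) < b := lt_of_lt_of_le ha0 hb
    have hbq : (0:ℝ) < b ^ q := Real.rpow_pos_of_pos hb0 q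
    -- T a - T b = ∫_{Ioc a b} f
    have h1 : T a - T b = ∫ x in Set.Ioc a b, f x := by
      rw [hTsplit a b (le_trans hr₁₀ ha) hb]; ring
    -- ∫ f ≥ (∫ v)/b^q
    have h2 : (∫ x in Set.Ioc a b, v x) / b ^ q ≤ ∫ x in Set.Ioc a b, f x := by
      have hiv : IntegrableOn v (Set.Ioc a b) := hvint a b ha
      have hif : IntegrableOn f (Set.Ioc a b) :=
        hint.mono_set (fun x hx => lt_of_le_of_lt (le_trans hr₁₀ ha) hx.1)
      have := setIntegral_mono_on (hiv.div_const (b ^ q)) hif measurableSet_Ioc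
        (fun x hx => by
          have hx0 : (0:ℝ) < x := lt_of_lt_of_le ha0 hx.1.le
          have hxq : (0:ℝ) < x ^ q := Real.rpow_pos_of_pos hx0 q
          have hxb : x ^ q ≤ b ^ q := Real.rpow_le_rpow hx0.le hx.2 hq0.le
          exact div_le_div_of_nonneg_left (hv_nonneg x) hxq hxb)
      rwa [MeasureTheory.integral_div] at this
    -- lower bound on ∫ v over Ioc a b
    have hVb : K / 2 * b ^ q ≤ ∫ x in Set.Ioc 0 b, v x := by
      have hkb := hKey b (le_trans hr₁₀ (le_trans ha hb))
      have hTb : T b ≤ T r₁ := hTmono r₁ b hr₁₀ (le_trans ha hb)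
      have : b ^ q * T b ≤ b ^ q * (K / 2) :=
        mul_le_mul_of_nonneg_left (by linarith) hbq.le
      nlinarith
    have hVa : (∫ x in Set.Ioc 0 a, v x) ≤ B * a ^ q := hVup a (le_trans hr₁1 ha)
    have h3 : (∫ x in Set.Ioc a b, v x) = (∫ x in Set.Ioc 0 b, v x) - ∫ x in Set.Ioc 0 a, v x :=
      hVdiff a b ha hb
    -- combine
    have haq : (0:ℝ) < a ^ q := Real.rpow_pos_of_pos ha0 q
    have hbqeq : b ^ q = L ^ q * a ^ q := Real.mul_rpow (by linarith) ha0.le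
    have h4 : K / 2 * b ^ q - B * a ^ q ≤ ∫ x in Set.Ioc a b, v x := by
      rw [h3]; linarith
    have h5 : (K / 2 * b ^ q - B * a ^ q) / b ^ q ≤ (∫ x in Set.Ioc a b, v x) / b ^ q :=
      (div_le_div_iff_of_pos_right hbq).mpr h4
    have h6 : K / 4 ≤ (K / 2 * b ^ q - B * a ^ q) / b ^ q := by
      rw [sub_div, mul_div_assoc, div_self hbq.ne', mul_one, hbqeq]
      have : B * a ^ q / (L ^ q * a ^ q) = B / L ^ q := by
        rw [mul_comm (L ^ q), ← div_div, mul_div_assoc, div_self haq.ne', mul_one]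
      rw [this]
      linarith
    linarith [h1, h2, h5, h6]
  -- induction
  have hind : ∀ n : ℕ, T (L ^ n * r₁) ≤ T r₁ - n * (K / 4) := by
    intro n
    induction n with
    | zero => simp
    | succ n ih =>
      have hLn : (1:ℝ) ≤ L ^ n := one_le_pow₀ hL1.le
      have h1 : r₁ ≤ L ^ n * r₁ := le_mul_of_one_le_left hr₁0.le hLn
      have := hstep (L ^ n * r₁) h1
      have heq : L * (L ^ n * r₁) = L ^ (n+1) * r₁ := by ring
      rw [heq] at this
      push_cast
      linarith
  obtain ⟨n, hn⟩ := exists_nat_gt (4 * T r₁ / K)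
  have h1 := hind n
  have h2 : 0 ≤ T (L ^ n * r₁) :=
    hTnn _ (le_trans hr₁₀ (le_mul_of_one_le_left hr₁0.le (one_le_pow₀ hL1.le)))
  have h3 : (n:ℝ) * (K / 4) ≤ T r₁ := by linarith
  have h4 : (n:ℝ) > 4 * T r₁ / K := hn
  rw [gt_iff_lt, div_lt_iff₀ hK0] at h4
  nlinarith
end

section
/- Let $w$ be a decreasing weight with $\lim_{t\to\infty} w(t)=\rho>0$, and suppose $v$ is a weight such that for all $r>0$, $\frac1r\int_0^r w \approx \frac1r\int_0^r v + \int_r^\infty \frac{v(s)}{s}\,ds$ (with equivalence constants independent of $r$), with the right-hand side finite. Then a contradiction follows; i.e., no such $v$ exists. Consequently, if there exists a weight $v$ with $\Lambda^1(w)=\Gamma^1(v)$ then $w(\infty)=0$. -/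
open MeasureTheory Set

/-- If `w` is a decreasing weight with `w(∞) = ρ > 0`, then there is no weight `v` with
`(1/r)∫_0^r w ≈ (1/r)∫_0^r v + ∫_r^∞ v(s)/s ds` (finite right-hand side); hence if
`Λ¹(w) = Γ¹(v)` for some weight `v`, then `w(∞) = 0`. -/
theorem stmt_13 (w : ℝ → ℝ) (ρ : ℝ) (hρ : 0 < ρ)
    (hw_nonneg : ∀ x, 0 ≤ w x)
    (hw_dec : AntitoneOn w (Set.Ioi 0))
    (hw_lim : Filter.Tendsto w Filter.atTop (nhds ρ))
    (hw_loc : ∀ t > 0, IntegrableOn w (Set.Ioc 0 t)) :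
    ¬ ∃ v : ℝ → ℝ, Measurable v ∧ (∀ x, 0 ≤ v x) ∧
      (∀ r > 0, IntegrableOn v (Set.Ioc 0 r) ∧ IntegrableOn (fun s => v s / s) (Set.Ioi r)) ∧
      ∃ C > 0, ∀ r > 0,
        C⁻¹ * ((1 / r) * ∫ s in Set.Ioc 0 r, w s) ≤
          (1 / r) * (∫ s in Set.Ioc 0 r, v s) + ∫ s in Set.Ioi r, v s / s ∧
        (1 / r) * (∫ s in Set.Ioc 0 r, v s) + ∫ s in Set.Ioi r, v s / s ≤
          C * ((1 / r) * ∫ s in Set.Ioc 0 r, w s) := by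
  rintro ⟨v, hv_meas, hv_nonneg, hv_int, C, hC, hCineq⟩
  -- w ≥ ρ on (0,∞)
  have hwρ : ∀ x > 0, ρ ≤ w x := by
    intro x hx
    refine le_of_tendsto hw_lim ?_
    filter_upwards [Filter.eventually_ge_atTop x] with y hy
    exact hw_dec hx (lt_of_lt_of_le hx hy) hy
  -- nonnegativity of v s / s on Ioi t for t ≥ 0
  have hvs_nonneg : ∀ t : ℝ, 0 ≤ t →
      (0 : ℝ → ℝ) ≤ᵐ[volume.restrict (Set.Ioi t)] fun s => v s / s := by
    intro t ht
    refine (ae_restrict_iff' measurableSet_Ioi).2 (Filter.Eventually.of_forall ?_)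
    intro s hs
    exact div_nonneg (hv_nonneg s) (le_of_lt (lt_of_le_of_lt ht hs))
  -- tail antitone
  have htail_mono : ∀ t r : ℝ, 0 < t → t ≤ r →
      (∫ s in Set.Ioi r, v s / s) ≤ ∫ s in Set.Ioi t, v s / s := by
    intro t r ht htr
    exact setIntegral_mono_set (hv_int t ht).2 (hvs_nonneg t ht.le)
      (Filter.Eventually.of_forall (Set.Ioi_subset_Ioi htr))
  -- tail tends to 0
  have htail : Filter.Tendsto (fun r => ∫ s in Set.Ioi r, v s / s)
      Filter.atTop (nhds 0) := by
    have hint1 := (hv_int 1 one_pos).2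
    have h1 := MeasureTheory.intervalIntegral_tendsto_integral_Ioi 1 hint1
      (Filter.tendsto_id (α := ℝ))
    have h2 : Filter.Tendsto
        (fun r : ℝ => (∫ s in Set.Ioi 1, v s / s) - ∫ x in (1:ℝ)..r, v x / x)
        Filter.atTop (nhds 0) := by
      have := (tendsto_const_nhds (x := ∫ s in Set.Ioi 1, v s / s)
        (f := Filter.atTop (α := ℝ))).sub h1
      simpa using this
    refine h2.congr' ?_
    filter_upwards [Filter.eventually_ge_atTop (1 : ℝ)] with r hr
    have hsplit : Set.Ioc 1 r ∪ Set.Ioi r = Set.Ioi (1 : ℝ) :=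
      Set.Ioc_union_Ioi_eq_Ioi hr
    have hdisj : Disjoint (Set.Ioc 1 r) (Set.Ioi r) :=
      Set.Ioc_disjoint_Ioi le_rfl
    have hu : (∫ s in Set.Ioi 1, v s / s) =
        (∫ s in Set.Ioc 1 r, v s / s) + ∫ s in Set.Ioi r, v s / s := by
      rw [← hsplit]
      exact MeasureTheory.setIntegral_union hdisj measurableSet_Ioi
        (hint1.mono_set (hsplit ▸ Set.subset_union_left))
        (hint1.mono_set (hsplit ▸ Set.subset_union_right))
    rw [intervalIntegral.integral_of_le hr]
    linarith [hu]
  -- lower bound: ρ ≤ (1/r) ∫ w on Ioc 0 r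
  have hlow : ∀ r : ℝ, 0 < r → ρ ≤ (1 / r) * ∫ s in Set.Ioc 0 r, w s := by
    intro r hr
    have h1 : (ρ * r) ≤ ∫ s in Set.Ioc 0 r, w s := by
      have : ∫ s in Set.Ioc 0 r, (ρ : ℝ) ≤ ∫ s in Set.Ioc 0 r, w s := by
        refine setIntegral_mono_on (integrableOn_const ?_)
          (hw_loc r hr) measurableSet_Ioc ?_
        · simp [Real.volume_Ioc]
        · intro s hs; exact hwρ s hs.1
      rwa [setIntegral_const, Real.volume_real_Ioc_of_le hr.le, smul_eq_mul,
        sub_zero, mul_comm] at this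
    calc ρ = (1 / r) * (ρ * r) := by field_simp
    _ ≤ (1 / r) * ∫ s in Set.Ioc 0 r, w s :=
        mul_le_mul_of_nonneg_left h1 (by positivity)
  -- the quantity ε
  set ε := C⁻¹ * ρ / 3 with hεdef
  have hεpos : 0 < ε := by positivity
  -- choose R with small tail
  obtain ⟨R, hRge, hRtail⟩ : ∃ R : ℝ, 1 ≤ R ∧ (∫ s in Set.Ioi R, v s / s) < ε := by
    have := (htail.eventually_lt_const hεpos).and (Filter.eventually_ge_atTop (1 : ℝ))
    obtain ⟨R, h1, h2⟩ := this.exists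
    exact ⟨R, h2, h1⟩
  have hRpos : 0 < R := lt_of_lt_of_le one_pos hRge
  -- choose r large
  have hK : Filter.Tendsto (fun r : ℝ => (1 / r) * ∫ s in Set.Ioc 0 R, v s)
      Filter.atTop (nhds 0) := by
    have := tendsto_inv_atTop_zero.mul_const (∫ s in Set.Ioc 0 R, v s)
    simpa [one_div] using this
  obtain ⟨r, hrK, hrR⟩ : ∃ r : ℝ, ((1 / r) * ∫ s in Set.Ioc 0 R, v s) < ε ∧ R ≤ r := by
    have := (hK.eventually_lt_const hεpos).and (Filter.eventually_ge_atTop R)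
    exact this.exists
  have hrpos : 0 < r := lt_of_lt_of_le hRpos hrR
  -- split the integral of v over Ioc 0 r
  have hsplit : Set.Ioc 0 R ∪ Set.Ioc R r = Set.Ioc (0:ℝ) r :=
    Set.Ioc_union_Ioc_eq_Ioc hRpos.le hrR
  have hvr := (hv_int r hrpos).1
  have hvsR := (hv_int R hRpos).2
  have hmid : (∫ s in Set.Ioc R r, v s) ≤ r * ∫ s in Set.Ioi R, v s / s := by
    have h1 : (∫ s in Set.Ioc R r, v s) ≤ ∫ s in Set.Ioc R r, r * (v s / s) := by
      refine setIntegral_mono_on (hvr.mono_set (hsplit ▸ Set.subset_union_right))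
        ((hvsR.mono_set Set.Ioc_subset_Ioi_self).const_mul r) measurableSet_Ioc ?_
      intro s hs
      have hs0 : 0 < s := lt_of_lt_of_le hRpos hs.1.le
      rw [mul_div_assoc']
      rw [le_div_iff₀ hs0, mul_comm r (v s)]
      exact mul_le_mul_of_nonneg_left hs.2 (hv_nonneg s)
    have h2 : (∫ s in Set.Ioc R r, v s / s) ≤ ∫ s in Set.Ioi R, v s / s :=
      setIntegral_mono_set hvsR (hvs_nonneg R hRpos.le)
        (Filter.Eventually.of_forall Set.Ioc_subset_Ioi_self)
    calc (∫ s in Set.Ioc R r, v s) ≤ ∫ s in Set.Ioc R r, r * (v s / s) := h1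
    _ = r * ∫ s in Set.Ioc R r, v s / s := by rw [integral_const_mul]
    _ ≤ r * ∫ s in Set.Ioi R, v s / s :=
        mul_le_mul_of_nonneg_left h2 hrpos.le
  have hsum : (∫ s in Set.Ioc 0 r, v s) =
      (∫ s in Set.Ioc 0 R, v s) + ∫ s in Set.Ioc R r, v s := by
    rw [← hsplit]
    exact MeasureTheory.setIntegral_union (Set.Ioc_disjoint_Ioc_of_le le_rfl)
      measurableSet_Ioc (hvr.mono_set (hsplit ▸ Set.subset_union_left))
      (hvr.mono_set (hsplit ▸ Set.subset_union_right))
  -- estimate F r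
  have hF : (1 / r) * (∫ s in Set.Ioc 0 r, v s) + (∫ s in Set.Ioi r, v s / s) < 3 * ε := by
    have htail_r : (∫ s in Set.Ioi r, v s / s) ≤ ∫ s in Set.Ioi R, v s / s :=
      htail_mono R r hRpos hrR
    have h3 : (1 / r) * (∫ s in Set.Ioc 0 r, v s) ≤
        (1 / r) * (∫ s in Set.Ioc 0 R, v s) + ∫ s in Set.Ioi R, v s / s := by
      rw [hsum, mul_add]
      have : (1 / r) * (∫ s in Set.Ioc R r, v s) ≤ ∫ s in Set.Ioi R, v s / s := by
        have := mul_le_mul_of_nonneg_left hmid (le_of_lt (by positivity : (0:ℝ) < 1/r))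
        calc (1 / r) * (∫ s in Set.Ioc R r, v s)
            ≤ (1 / r) * (r * ∫ s in Set.Ioi R, v s / s) := this
        _ = ∫ s in Set.Ioi R, v s / s := by field_simp
      linarith
    linarith
  -- contradiction
  have hge := (hCineq r hrpos).1
  have hlow' : C⁻¹ * ρ ≤ C⁻¹ * ((1 / r) * ∫ s in Set.Ioc 0 r, w s) :=
    mul_le_mul_of_nonneg_left (hlow r hrpos) (by positivity)
  have : C⁻¹ * ρ < 3 * ε := lt_of_le_of_lt (le_trans hlow' hge) hF
  rw [hεdef] at this
  linarith
end

section
/- Let $w$ be a weight and $W(t)=\int_0^t w$, and let $1<q<\infty$. Suppose that for every nonnegative decreasing $f^*$, $\int_0^\infty f^*(x)\,w(x)\,dx \approx \Big(\int_0^\infty f^*(x)\,(f^{**}(x))^{q-1}\,W^{q-1}(x)\,w(x)\,dx\Big)^{1/q}$ with constants independent of $f^*$. Then there exists $C$ such that for every nonnegative decreasing $f^*$, $\int_0^\infty f^*(x)\,w(x)\,dx \le C\,\sup_{t>0}\big(f^{**}(t)\,W(t)\big)$, i.e., $\Gamma^{1,\infty}(w)\subset\Lambda^1(w)$ on decreasing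 functions. -/
open MeasureTheory Set

/-- If `∫_0^∞ f* w ≈ (∫_0^∞ f* (f**)^{q-1} W^{q-1} w)^{1/q}` for all nonnegative decreasing
`f*`, then `∫_0^∞ f* w ≤ C sup_{t>0} (f**(t) W(t))`, i.e. `Γ^{1,∞}(w) ⊂ Λ¹(w)` on
decreasing functions. -/
theorem stmt_15 (w W : ℝ → ℝ) (q : ℝ) (hq : 1 < q)
    (hw_nonneg : ∀ x, 0 ≤ w x)
    (hw_loc : ∀ t > 0, IntegrableOn w (Set.Ioc 0 t))
    (hW : ∀ t, W t = ∫ s in Set.Ioc 0 t, w s)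
    (hyp : ∃ C > 0, ∀ f : ℝ → ℝ, (∀ x, 0 ≤ f x) → AntitoneOn f (Set.Ioi 0) →
      C⁻¹ * (∫ x in Set.Ioi 0,
          f x * ((1 / x) * ∫ s in Set.Ioc 0 x, f s) ^ (q - 1) * W x ^ (q - 1) * w x) ^ (1 / q) ≤
        (∫ x in Set.Ioi 0, f x * w x) ∧
      (∫ x in Set.Ioi 0, f x * w x) ≤
        C * (∫ x in Set.Ioi 0,
          f x * ((1 / x) * ∫ s in Set.Ioc 0 x, f s) ^ (q - 1) * W x ^ (q - 1) * w x) ^ (1 / q)) :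
    ∃ C > 0, ∀ f : ℝ → ℝ, (∀ x, 0 ≤ f x) → AntitoneOn f (Set.Ioi 0) →
      ∀ B : ℝ, (∀ t > 0, ((1 / t) * ∫ s in Set.Ioc 0 t, f s) * W t ≤ B) →
        (∫ x in Set.Ioi 0, f x * w x) ≤ C * B := by
  obtain ⟨C, hC, hmain⟩ := hyp
  have hq1 : (0:ℝ) < q - 1 := by linarith
  have hq0 : (0:ℝ) < q := by linarith
  refine ⟨C ^ (q / (q - 1)), Real.rpow_pos_of_pos hC _, ?_⟩
  intro f hf hanti B hB
  have hW0 : ∀ x, 0 ≤ W x := fun x => by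
    rw [hW x]; exact setIntegral_nonneg measurableSet_Ioc fun s _ => hw_nonneg s
  have hF0 : ∀ x : ℝ, 0 < x → 0 ≤ (1 / x) * ∫ s in Set.Ioc 0 x, f s := by
    intro x hx
    exact mul_nonneg (by positivity)
      (setIntegral_nonneg measurableSet_Ioc fun s _ => hf s)
  have hB0 : 0 ≤ B := by
    have h1 := hB 1 one_pos
    exact le_trans (mul_nonneg (hF0 1 one_pos) (hW0 1)) h1
  set I := ∫ x in Set.Ioi 0, f x * w x with hI
  have hC' : 0 ≤ C ^ (q / (q - 1)) := (Real.rpow_pos_of_pos hC _).le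
  by_cases hint : IntegrableOn (fun x => f x * w x) (Set.Ioi 0)
  · have hI0 : 0 ≤ I :=
      setIntegral_nonneg measurableSet_Ioi fun x _ => mul_nonneg (hf x) (hw_nonneg x)
    set J := ∫ x in Set.Ioi 0,
        f x * ((1 / x) * ∫ s in Set.Ioc 0 x, f s) ^ (q - 1) * W x ^ (q - 1) * w x with hJdef
    have hJ0 : 0 ≤ J := by
      refine setIntegral_nonneg measurableSet_Ioi fun x hx => ?_
      exact mul_nonneg (mul_nonneg (mul_nonneg (hf x) (Real.rpow_nonneg (hF0 x hx) _))
        (Real.rpow_nonneg (hW0 x) _)) (hw_nonneg x)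
    have hJle : J ≤ B ^ (q - 1) * I := by
      have hgi : Integrable (fun x => B ^ (q - 1) * (f x * w x))
          ((volume : Measure ℝ).restrict (Set.Ioi 0)) := hint.const_mul _
      have hmono : J ≤ ∫ x in Set.Ioi 0, B ^ (q - 1) * (f x * w x) := by
        refine integral_mono_of_nonneg ?_ hgi ?_
        · filter_upwards [ae_restrict_mem measurableSet_Ioi] with x hx
          exact mul_nonneg (mul_nonneg (mul_nonneg (hf x) (Real.rpow_nonneg (hF0 x hx) _))
            (Real.rpow_nonneg (hW0 x) _)) (hw_nonneg x)
        · filter_upwards [ae_restrict_mem measurableSet_Ioi] with x hx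
          have key : ((1 / x) * ∫ s in Set.Ioc 0 x, f s) ^ (q - 1) * W x ^ (q - 1)
              ≤ B ^ (q - 1) := by
            rw [← Real.mul_rpow (hF0 x hx) (hW0 x)]
            exact Real.rpow_le_rpow (mul_nonneg (hF0 x hx) (hW0 x)) (hB x hx) hq1.le
          calc f x * ((1 / x) * ∫ s in Set.Ioc 0 x, f s) ^ (q - 1) * W x ^ (q - 1) * w x
              = (((1 / x) * ∫ s in Set.Ioc 0 x, f s) ^ (q - 1) * W x ^ (q - 1)) * (f x * w x) := by
                ring
            _ ≤ B ^ (q - 1) * (f x * w x) :=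
                mul_le_mul_of_nonneg_right key (mul_nonneg (hf x) (hw_nonneg x))
      rwa [integral_const_mul] at hmono
    have hmain2 := (hmain f hf hanti).2
    have h1 : I ≤ C * (B ^ (q - 1) * I) ^ (1 / q) := by
      refine hmain2.trans (mul_le_mul_of_nonneg_left ?_ hC.le)
      exact Real.rpow_le_rpow hJ0 hJle (by positivity)
    rcases hI0.eq_or_lt with hI0' | hIpos
    · rw [← hI0']; exact mul_nonneg hC' hB0
    rcases hB0.eq_or_lt with hB0' | hBpos
    · exfalso
      rw [← hB0', Real.zero_rpow hq1.ne', zero_mul, Real.zero_rpow (by positivity),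
        mul_zero] at h1
      linarith
    -- raise h1 to the q-th power
    have hX0 : 0 ≤ B ^ (q - 1) * I := mul_nonneg (by positivity) hI0
    have h2 : I ^ q ≤ C ^ q * (B ^ (q - 1) * I) := by
      have h := Real.rpow_le_rpow hI0 h1 hq0.le
      rwa [Real.mul_rpow hC.le (Real.rpow_nonneg hX0 _), ← Real.rpow_mul hX0, one_div,
        inv_mul_cancel₀ hq0.ne', Real.rpow_one] at h
    have h3 : I ^ (q - 1) ≤ C ^ q * B ^ (q - 1) := by
      have hsplit : I ^ q = I ^ (q - 1) * I := by
        have : I ^ ((q - 1) + 1) = I ^ (q - 1) * I ^ (1 : ℝ) := Real.rpow_add hIpos _ _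
        simpa [Real.rpow_one] using this
      rw [hsplit] at h2
      have h2' : I ^ (q - 1) * I ≤ C ^ q * B ^ (q - 1) * I := by
        calc I ^ (q - 1) * I ≤ C ^ q * (B ^ (q - 1) * I) := h2
          _ = C ^ q * B ^ (q - 1) * I := by ring
      exact le_of_mul_le_mul_right h2' hIpos
    have h4 : (C ^ (q / (q - 1)) * B) ^ (q - 1) = C ^ q * B ^ (q - 1) := by
      rw [Real.mul_rpow hC' hB0, ← Real.rpow_mul hC.le, div_mul_cancel₀ _ hq1.ne']
    rw [← h4] at h3
    exact (Real.rpow_le_rpow_iff hI0 (mul_nonneg hC' hB0) hq1).mp h3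
  · rw [hI, integral_undef hint]
    exact mul_nonneg hC' hB0
end

section
/- Let $w=\chi_{(0,1)}$ and $v(t)=t^{-2}\big(\log(4t)\,\chi_{(1/4,1/2)}(t) - \log t\,\chi_{(1/2,1)}(t)\big)$. Then $v\ge 0$ and for all $r>0$: $\frac1r\int_0^r w(s)\,ds \approx \frac1r\int_0^r v(s)\,ds + \int_r^\infty \frac{v(s)}{s}\,ds$, with equivalence constants independent of $r$. (More generally, the equivalence holds whenever $v$ is a bounded nonnegative function with compact support in $(0,\infty)$ vanishing in a neighborhood of $0$, with $v$ not a.e. zero.) -/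
/-!
Multiplied by `r`, the right-hand side is `∫₀^∞ v(s) min(1, r/s) ds`: the kernel is `1` on
`(0, r]` and `r/s` beyond. When `v ≥ 0` lives on `[a, b] ⊂ (0, ∞)`, the kernel is squeezed there
between `min(1, r/b)` and `min(1, r/a)`, so the right-hand side is comparable to
`‖v‖₁ min(1, r) / r`, and `min(1, r) = ∫₀ʳ w`.
-/

open MeasureTheory Set

lemma integrable_of_le_of_forall_notMem_Icc_eq_zero {f : ℝ → ℝ} (hf : Measurable f)
    {M a b : ℝ} (h0 : ∀ t, 0 ≤ f t) (hM : ∀ t, f t ≤ M)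
    (hsupp : ∀ t, t ∉ Icc a b → f t = 0) :
    Integrable f :=
  (Measure.integrableOn_of_bounded (M := M) isCompact_Icc.measure_lt_top.ne
    hf.aestronglyMeasurable (ae_of_all _ fun t => by
      rw [Real.norm_of_nonneg (h0 t)]; exact hM t)).integrable_of_forall_notMem_eq_zero hsupp

lemma integrableOn_min_one_div_mul {v : ℝ → ℝ} (hv : IntegrableOn v (Ioi 0)) (r : ℝ)
    (hr : 0 ≤ r) :
    IntegrableOn (fun s => min 1 (r / s) * v s) (Ioi 0) := by
  refine hv.bdd_mul (c := 1) (by fun_prop) ?_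
  filter_upwards [self_mem_ae_restrict measurableSet_Ioi] with s hs
  rw [Real.norm_of_nonneg (le_min zero_le_one (div_nonneg hr (le_of_lt hs)))]
  exact min_le_left _ _

lemma setIntegral_Ioc_add_mul_setIntegral_Ioi_div {v : ℝ → ℝ} (hv : IntegrableOn v (Ioi 0))
    {r : ℝ} (hr : 0 < r) :
    (∫ s in Ioc 0 r, v s) + r * ∫ s in Ioi r, v s / s =
      ∫ s in Ioi 0, min 1 (r / s) * v s := by
  have hk := integrableOn_min_one_div_mul hv r hr.le
  rw [← Ioc_union_Ioi_eq_Ioi hr.le, setIntegral_union Ioc_disjoint_Ioi_same measurableSet_Ioi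
    (hk.mono_set Ioc_subset_Ioi_self) (hk.mono_set (Ioi_subset_Ioi hr.le)), ← integral_const_mul]
  congr 1
  · refine setIntegral_congr_fun measurableSet_Ioc fun s hs => ?_
    rw [min_eq_left ((one_le_div hs.1).2 hs.2), one_mul]
  · refine setIntegral_congr_fun measurableSet_Ioi fun s hs => ?_
    have hs0 : 0 < s := hr.trans hs
    rw [min_eq_right ((div_le_one hs0).2 (le_of_lt hs))]
    ring

section KernelBounds

variable {v : ℝ → ℝ} {a b r : ℝ}

lemma le_setIntegral_min_one_div_mul (hv : IntegrableOn v (Ioi 0)) (h0 : ∀ t, 0 ≤ v t)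
    (ha : 0 < a) (hr : 0 < r) (hsupp : ∀ t, t ∉ Icc a b → v t = 0) :
    min 1 (r / b) * ∫ s in Ioi 0, v s ≤ ∫ s in Ioi 0, min 1 (r / s) * v s := by
  rw [← integral_const_mul]
  refine setIntegral_mono (hv.const_mul _) (integrableOn_min_one_div_mul hv r hr.le) fun s => ?_
  by_cases hs : s ∈ Icc a b
  · have hs0 : 0 < s := ha.trans_le hs.1
    have hvs := h0 s
    gcongr
    exact hs.2
  · simp [hsupp s hs]

lemma setIntegral_min_one_div_mul_le (hv : IntegrableOn v (Ioi 0)) (h0 : ∀ t, 0 ≤ v t)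
    (ha : 0 < a) (hr : 0 < r) (hsupp : ∀ t, t ∉ Icc a b → v t = 0) :
    ∫ s in Ioi 0, min 1 (r / s) * v s ≤ min 1 (r / a) * ∫ s in Ioi 0, v s := by
  rw [← integral_const_mul]
  refine setIntegral_mono (integrableOn_min_one_div_mul hv r hr.le) (hv.const_mul _) fun s => ?_
  by_cases hs : s ∈ Icc a b
  · have hvs := h0 s
    gcongr
    exact hs.1
  · simp [hsupp s hs]

end KernelBounds

lemma min_one_div_mul_min_le {a r : ℝ} (ha : 0 < a) (hr : 0 < r) :
    min 1 (r / a) * min a 1 ≤ min r 1 := by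
  rcases le_total r 1 with h | h
  · calc min 1 (r / a) * min a 1 ≤ r / a * a := by gcongr <;> first | positivity | simp
      _ = min r 1 := by rw [div_mul_cancel₀ r ha.ne', min_eq_left h]
  · calc min 1 (r / a) * min a 1 ≤ 1 * 1 := by gcongr <;> first | positivity | simp
      _ = min r 1 := by rw [one_mul, min_eq_right h]

lemma min_le_min_one_div_mul_max {b r : ℝ} (hb : 0 < b) (hr : 0 < r) :
    min r 1 ≤ min 1 (r / b) * max b 1 := by
  rcases le_total 1 (r / b) with h | h
  · rw [min_eq_left h, one_mul]
    exact (min_le_right _ _).trans (le_max_right _ _)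
  · rw [min_eq_right h]
    calc min r 1 ≤ r / b * b := by rw [div_mul_cancel₀ r hb.ne']; exact min_le_left _ _
      _ ≤ r / b * max b 1 := by gcongr; exact le_max_left _ _

lemma setIntegral_Ioc_indicator_Ioo_zero_one {r : ℝ} (hr : 0 ≤ r) :
    ∫ s in Ioc 0 r, (Ioo (0 : ℝ) 1).indicator (fun _ => (1 : ℝ)) s = min r 1 := by
  rw [setIntegral_indicator measurableSet_Ioo, setIntegral_const, smul_eq_mul, mul_one]
  have hsub : Ioo 0 (min r 1) ⊆ Ioc 0 r ∩ Ioo 0 1 := fun x hx =>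
    ⟨⟨hx.1, hx.2.le.trans (min_le_left _ _)⟩, hx.1, hx.2.trans_le (min_le_right _ _)⟩
  have hsup : Ioc 0 r ∩ Ioo 0 1 ⊆ Ioc 0 (min r 1) := fun x hx =>
    ⟨hx.1.1, le_min hx.1.2 hx.2.2.le⟩
  have hvol : volume (Ioc 0 r ∩ Ioo (0 : ℝ) 1) = ENNReal.ofReal (min r 1) :=
    le_antisymm (by simpa using measure_mono (μ := volume) hsup)
      (by simpa using measure_mono (μ := volume) hsub)
  rw [measureReal_def, hvol, ENNReal.toReal_ofReal (le_min hr zero_le_one)]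

theorem exists_indicator_average_equiv_of_support_subset_Icc {v : ℝ → ℝ}
    (hv : IntegrableOn v (Ioi 0)) (h0 : ∀ t, 0 ≤ v t) {a b : ℝ} (ha : 0 < a) (hab : a ≤ b)
    (hsupp : ∀ t, t ∉ Icc a b → v t = 0) (hI : 0 < ∫ t in Ioi 0, v t) :
    ∃ C > 0, ∀ r > 0,
      C⁻¹ * ((1 / r) * ∫ s in Ioc 0 r, (Ioo (0 : ℝ) 1).indicator (fun _ => (1 : ℝ)) s) ≤
        (1 / r) * (∫ s in Ioc 0 r, v s) + ∫ s in Ioi r, v s / s ∧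
      (1 / r) * (∫ s in Ioc 0 r, v s) + ∫ s in Ioi r, v s / s ≤
        C * ((1 / r) * ∫ s in Ioc 0 r, (Ioo (0 : ℝ) 1).indicator (fun _ => (1 : ℝ)) s) := by
  set I := ∫ t in Ioi 0, v t
  have hb : 0 < b := ha.trans_le hab
  refine ⟨max (max b 1 / I) (I / min a 1), by positivity, fun r hr => ?_⟩
  have hCinv : (max (max b 1 / I) (I / min a 1))⁻¹ ≤ I / max b 1 := by
    rw [← inv_div (max b 1) I]; exact inv_anti₀ (by positivity) (le_max_left _ _)
  have hC : I / min a 1 ≤ max (max b 1 / I) (I / min a 1) := le_max_right _ _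
  have hlo := le_setIntegral_min_one_div_mul hv h0 ha hr hsupp
  have hhi := setIntegral_min_one_div_mul_le hv h0 ha hr hsupp
  have hlo' := min_le_min_one_div_mul_max hb hr
  have hhi' := min_one_div_mul_min_le ha hr
  have hF : (1 / r) * (∫ s in Ioc 0 r, v s) + ∫ s in Ioi r, v s / s =
      1 / r * ∫ s in Ioi 0, min 1 (r / s) * v s := by
    rw [← setIntegral_Ioc_add_mul_setIntegral_Ioi_div hv hr]; field_simp
  rw [hF, setIntegral_Ioc_indicator_Ioo_zero_one hr.le, mul_left_comm, mul_left_comm _ (1 / r)]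
  refine ⟨mul_le_mul_of_nonneg_left ?_ (by positivity),
    mul_le_mul_of_nonneg_left ?_ (by positivity)⟩
  · calc _ ≤ I / max b 1 * min r 1 := by gcongr
      _ ≤ I / max b 1 * (min 1 (r / b) * max b 1) := by gcongr
      _ = min 1 (r / b) * I := by field_simp
      _ ≤ _ := hlo
  · calc _ ≤ min 1 (r / a) * I := hhi
      _ = I / min a 1 * (min 1 (r / a) * min a 1) := by field_simp
      _ ≤ I / min a 1 * min r 1 := by gcongr
      _ ≤ _ := by gcongr

noncomputable def logWeight (t : ℝ) : ℝ :=
  t⁻¹ ^ 2 * (Set.indicator (Set.Ioo (1/4 : ℝ) (1/2)) (fun x => Real.log (4 * x)) t -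
    Set.indicator (Set.Ioo (1/2 : ℝ) 1) (fun x => Real.log x) t)

lemma logWeight_of_mem_Ioo_quarter_half {t : ℝ} (ht : t ∈ Ioo (1/4 : ℝ) (1/2)) :
    logWeight t = t⁻¹ ^ 2 * Real.log (4 * t) := by
  have ht' : t ∉ Ioo (1/2 : ℝ) 1 := fun h => h.1.not_gt ht.2
  rw [logWeight, indicator_of_mem ht, indicator_of_notMem ht', sub_zero]

lemma logWeight_of_mem_Ioo_half_one {t : ℝ} (ht : t ∈ Ioo (1/2 : ℝ) 1) :
    logWeight t = t⁻¹ ^ 2 * Real.log t⁻¹ := by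
  have ht' : t ∉ Ioo (1/4 : ℝ) (1/2) := fun h => h.2.not_gt ht.1
  rw [logWeight, indicator_of_mem ht, indicator_of_notMem ht', zero_sub, Real.log_inv]

lemma logWeight_eq_zero {t : ℝ} (h₁ : t ∉ Ioo (1/4 : ℝ) (1/2))
    (h₂ : t ∉ Ioo (1/2 : ℝ) 1) :
    logWeight t = 0 := by
  rw [logWeight, indicator_of_notMem h₁, indicator_of_notMem h₂, sub_zero, mul_zero]

lemma logWeight_eq_zero_or_exists (t : ℝ) :
    logWeight t = 0 ∨
      1/4 < t ∧ ∃ x ∈ Ioo (1 : ℝ) 2, logWeight t = t⁻¹ ^ 2 * Real.log x := by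
  by_cases h₁ : t ∈ Ioo (1/4 : ℝ) (1/2)
  · refine .inr ⟨h₁.1, 4 * t, ⟨?_, ?_⟩, logWeight_of_mem_Ioo_quarter_half h₁⟩ <;>
      linarith [h₁.1, h₁.2]
  by_cases h₂ : t ∈ Ioo (1/2 : ℝ) 1
  · have ht : 0 < t := by linarith [h₂.1]
    refine .inr ⟨by linarith [h₂.1], t⁻¹, ⟨?_, ?_⟩, logWeight_of_mem_Ioo_half_one h₂⟩
    · exact one_lt_inv₀ ht |>.2 h₂.2
    · rw [inv_lt_comm₀ ht two_pos]; linarith [h₂.1]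
  exact .inl (logWeight_eq_zero h₁ h₂)

lemma logWeight_nonneg (t : ℝ) : 0 ≤ logWeight t := by
  obtain h | ⟨-, x, hx, h⟩ := logWeight_eq_zero_or_exists t
  · exact h.ge
  · rw [h]; exact mul_nonneg (sq_nonneg _) (Real.log_nonneg hx.1.le)

lemma logWeight_le_sixteen (t : ℝ) : logWeight t ≤ 16 := by
  obtain h | ⟨ht, x, hx, h⟩ := logWeight_eq_zero_or_exists t
  · rw [h]; norm_num
  · have hinv : t⁻¹ < 4 := by rw [inv_lt_comm₀ (by linarith) four_pos]; linarith
    have hlog : Real.log x ≤ 1 := by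
      linarith [Real.log_le_sub_one_of_pos (zero_lt_one.trans hx.1), hx.2]
    rw [h]
    calc t⁻¹ ^ 2 * Real.log x ≤ 4 ^ 2 * 1 := by
          gcongr
          exact Real.log_nonneg hx.1.le
      _ = 16 := by norm_num

lemma logWeight_eq_zero_of_notMem_Icc {t : ℝ} (ht : t ∉ Icc (1/4 : ℝ) 1) : logWeight t = 0 :=
  logWeight_eq_zero (fun h => ht ⟨h.1.le, by linarith [h.2]⟩)
    (fun h => ht ⟨by linarith [h.1], h.2.le⟩)

lemma measurable_logWeight : Measurable logWeight := by
  unfold logWeight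
  fun_prop (disch := exact measurableSet_Ioo)

lemma integrable_logWeight : Integrable logWeight :=
  integrable_of_le_of_forall_notMem_Icc_eq_zero measurable_logWeight logWeight_nonneg
    logWeight_le_sixteen fun _ => logWeight_eq_zero_of_notMem_Icc

lemma setIntegral_Ioi_logWeight_pos : 0 < ∫ t in Ioi 0, logWeight t := by
  rw [setIntegral_pos_iff_support_of_nonneg_ae (ae_of_all _ logWeight_nonneg)
    integrable_logWeight.integrableOn]
  have hsub : Ioo (1/4 : ℝ) (1/2) ⊆ Function.support logWeight ∩ Ioi 0 := fun t ht => by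
    refine ⟨?_, lt_trans (by norm_num) ht.1⟩
    rw [Function.mem_support, logWeight_of_mem_Ioo_quarter_half ht]
    have ht0 : 0 < t := by linarith [ht.1]
    exact (mul_pos (by positivity) (Real.log_pos (by linarith [ht.1]))).ne'
  exact (measure_mono hsub).trans_lt' (by rw [Real.volume_Ioo]; norm_num)

/-- For `w = χ_{(0,1)}` and
`v(t) = t⁻²(log(4t) χ_{(1/4,1/2)}(t) - log t χ_{(1/2,1)}(t))`, one has `v ≥ 0` and
`(1/r)∫_0^r w ≈ (1/r)∫_0^r v + ∫_r^∞ v(s)/s ds`; more generally this equivalence holds for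
any bounded nonnegative `v'` with compact support in `(0,∞)` which is not a.e. zero. -/
theorem stmt_18 (w v : ℝ → ℝ)
    (hw : ∀ t, w t = Set.indicator (Set.Ioo (0 : ℝ) 1) (fun _ => (1 : ℝ)) t)
    (hv : ∀ t, v t = t⁻¹ ^ 2 *
      (Set.indicator (Set.Ioo (1/4 : ℝ) (1/2)) (fun x => Real.log (4 * x)) t -
        Set.indicator (Set.Ioo (1/2 : ℝ) 1) (fun x => Real.log x) t)) :
    (∀ t, 0 ≤ v t) ∧
    (∃ C > 0, ∀ r > 0,
      C⁻¹ * ((1 / r) * ∫ s in Set.Ioc 0 r, w s) ≤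
        (1 / r) * (∫ s in Set.Ioc 0 r, v s) + ∫ s in Set.Ioi r, v s / s ∧
      (1 / r) * (∫ s in Set.Ioc 0 r, v s) + ∫ s in Set.Ioi r, v s / s ≤
        C * ((1 / r) * ∫ s in Set.Ioc 0 r, w s)) ∧
    (∀ v' : ℝ → ℝ, Measurable v' → (∀ t, 0 ≤ v' t) → (∃ M, ∀ t, v' t ≤ M) →
      (∃ a b : ℝ, 0 < a ∧ a ≤ b ∧ ∀ t, t ∉ Set.Icc a b → v' t = 0) →
      0 < (∫ t in Set.Ioi 0, v' t) →
      ∃ C > 0, ∀ r > 0,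
        C⁻¹ * ((1 / r) * ∫ s in Set.Ioc 0 r, w s) ≤
          (1 / r) * (∫ s in Set.Ioc 0 r, v' s) + ∫ s in Set.Ioi r, v' s / s ∧
        (1 / r) * (∫ s in Set.Ioc 0 r, v' s) + ∫ s in Set.Ioi r, v' s / s ≤
          C * ((1 / r) * ∫ s in Set.Ioc 0 r, w s)) := by
  obtain rfl : w = fun t => (Ioo (0 : ℝ) 1).indicator (fun _ => (1 : ℝ)) t := funext hw
  obtain rfl : v = logWeight := funext hv
  refine ⟨logWeight_nonneg,
    exists_indicator_average_equiv_of_support_subset_Icc integrable_logWeight.integrableOn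
      logWeight_nonneg (by norm_num) (by norm_num) (fun _ => logWeight_eq_zero_of_notMem_Icc)
      setIntegral_Ioi_logWeight_pos, ?_⟩
  rintro v' hm h0 ⟨M, hM⟩ ⟨a, b, ha, hab, hsupp⟩ hI
  exact exists_indicator_average_equiv_of_support_subset_Icc
    (integrable_of_le_of_forall_notMem_Icc_eq_zero hm h0 hM hsupp).integrableOn h0 ha hab hsupp hI
end
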